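/- Let U ⊆ ℝ³ be open and let F = (F_ij)_{1≤i,j≤3} be a symmetric matrix field of smooth real-valued functions on U satisfying the gauge condition ∂_k F_ik = 0 on U for each i. Then inc(inc(F)) = ΔΔ F on U, i.e. ε_ikl ε_jmn ∂_k∂_m ( ε_lab ε_ncd ∂_a∂_c F_bd ) = ΔΔ F_ij for all i, j. -/

import Mathlib

open MeasureTheory Real

/-- Partial derivative in the `i`-th coordinate direction of a function on `ℝ³`. -/
noncomputable def pd3 (i : Fin 3) (f : EuclideanSpace ℝ (Fin 3) → ℝ) :
    EuclideanSpace ℝ (Fin 3) → ℝ :=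
  fun x => fderiv ℝ f x (EuclideanSpace.single i 1)

/-- The Levi-Civita symbol `ε_ijk` on `{0,1,2}`. -/
noncomputable def lc (i j k : Fin 3) : ℝ :=
  (((j : ℕ) : ℝ) - ((i : ℕ) : ℝ)) * (((k : ℕ) : ℝ) - ((j : ℕ) : ℝ))
    * (((k : ℕ) : ℝ) - ((i : ℕ) : ℝ)) / 2

/-- The incompatibility tensor `inc(F)_ij = ε_ikl ε_jmn ∂_k ∂_m F_ln`. -/
noncomputable def inc (F : Fin 3 → Fin 3 → EuclideanSpace ℝ (Fin 3) → ℝ)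
    (i j : Fin 3) : EuclideanSpace ℝ (Fin 3) → ℝ :=
  fun x => ∑ k, ∑ l, ∑ m, ∑ n, lc i k l * lc j m n * pd3 k (pd3 m (F l n)) x

/-- The Laplacian `Δf = ∂_m ∂_m f` on `ℝ³`. -/
noncomputable def lap3 (f : EuclideanSpace ℝ (Fin 3) → ℝ) :
    EuclideanSpace ℝ (Fin 3) → ℝ :=
  fun x => ∑ m, pd3 m (pd3 m f) x

/-!
Expanding `inc` twice writes `inc (inc F)_ij` as a fourth-order operator whose coefficients are
products `ε_ikl ε_jmn ε_lab ε_ncd`. Contracting them in pairs with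
`ε_pqn ε_ncd = δ_pc δ_qd - δ_pd δ_qc` leaves
`∂_i∂_j∂_k∂_m F_km - ∂_i∂_m∂_k∂_m F_kj - ∂_k∂_j∂_k∂_m F_im + ∂_k∂_m∂_k∂_m F_ij`.
Partial derivatives of smooth functions commute, so each of the first three terms (the second
after using `F_kj = F_jk`) is a third derivative of a divergence `∂_q F_pq`, which vanishes on `U`
by the gauge condition; the last term is `ΔΔ F_ij`.
-/

open Finset Set

section Calculus

variable {U : Set (EuclideanSpace ℝ (Fin 3))} {f g : EuclideanSpace ℝ (Fin 3) → ℝ}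

theorem ContDiffOn.pd3 (hU : IsOpen U) (hf : ContDiffOn ℝ (⊤ : ℕ∞) f U) (k : Fin 3) :
    ContDiffOn ℝ (⊤ : ℕ∞) (pd3 k f) U :=
  (hf.fderiv_of_isOpen hU (by exact_mod_cast le_top)).clm_apply contDiffOn_const

theorem Set.EqOn.pd3 (hU : IsOpen U) (h : EqOn f g U) (k : Fin 3) :
    EqOn (pd3 k f) (pd3 k g) U := fun x hx => by
  simp only [_root_.pd3, (h.eventuallyEq_of_mem (hU.mem_nhds hx)).fderiv_eq]

theorem pd3_zero (k : Fin 3) : pd3 k 0 = 0 := by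
  ext; simp [pd3]

theorem pd3_pd3_comm (hU : IsOpen U) (hf : ContDiffOn ℝ (⊤ : ℕ∞) f U) (k m : Fin 3) :
    EqOn (pd3 k (pd3 m f)) (pd3 m (pd3 k f)) U := fun x hx => by
  have hfx := hf.contDiffAt (hU.mem_nhds hx)
  have hd : DifferentiableAt ℝ (fderiv ℝ f) x :=
    (hfx.fderiv_right (m := 1) (WithTop.coe_le_coe.mpr le_top)).differentiableAt one_ne_zero
  have hpartial : ∀ v, fderiv ℝ (fun y => fderiv ℝ f y v) x = (fderiv ℝ (fderiv ℝ f) x).flip v :=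
    fun v => by simpa using fderiv_clm_apply hd (differentiableAt_const v)
  change fderiv ℝ (fun y => fderiv ℝ f y _) x _ = fderiv ℝ (fun y => fderiv ℝ f y _) x _
  rw [hpartial, hpartial]
  exact (hfx.isSymmSndFDerivAt (by simp; exact WithTop.coe_le_coe.mpr le_top)).eq _ _

theorem pd3_sum_apply {ι : Type*} (s : Finset ι) {f : ι → EuclideanSpace ℝ (Fin 3) → ℝ}
    {x : EuclideanSpace ℝ (Fin 3)} (hf : ∀ q ∈ s, DifferentiableAt ℝ (f q) x) (k : Fin 3) :
    pd3 k (fun y => ∑ q ∈ s, f q y) x = ∑ q ∈ s, pd3 k (f q) x := by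
  simp [pd3, fderiv_fun_sum hf]

theorem pd3_const_mul_apply {x : EuclideanSpace ℝ (Fin 3)} (hf : DifferentiableAt ℝ f x)
    (c : ℝ) (k : Fin 3) : pd3 k (fun y => c * f y) x = c * pd3 k f x := by
  simp [pd3, fderiv_const_mul hf]

theorem pd3_sum {ι : Type*} [Fintype ι] (hU : IsOpen U) {f : ι → EuclideanSpace ℝ (Fin 3) → ℝ}
    (hf : ∀ q, ContDiffOn ℝ (⊤ : ℕ∞) (f q) U) (k : Fin 3) :
    EqOn (pd3 k (fun y => ∑ q, f q y)) (fun y => ∑ q, pd3 k (f q) y) U := fun _ hx =>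
  pd3_sum_apply _ (fun q _ => ((hf q).contDiffAt (hU.mem_nhds hx)).differentiableAt (by simp)) k

theorem pd3_pd3_pd3_comm (hU : IsOpen U) (hf : ContDiffOn ℝ (⊤ : ℕ∞) f U) (k a c : Fin 3) :
    EqOn (pd3 k (pd3 a (pd3 c f))) (pd3 a (pd3 c (pd3 k f))) U :=
  (pd3_pd3_comm hU (hf.pd3 hU c) k a).trans ((pd3_pd3_comm hU hf k c).pd3 hU a)

theorem sum_pd3_eqOn_zero {ι : Type*} [Fintype ι] (hU : IsOpen U)
    {f : ι → EuclideanSpace ℝ (Fin 3) → ℝ} (hf : ∀ q, ContDiffOn ℝ (⊤ : ℕ∞) (f q) U)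
    (h : EqOn (fun y => ∑ q, f q y) 0 U) (k : Fin 3) :
    EqOn (fun y => ∑ q, pd3 k (f q) y) 0 U := fun y hy => by
  rw [← pd3_sum hU hf k hy, h.pd3 hU k hy, pd3_zero]

theorem sum_pd3_pd3_pd3_pd3_eq_zero_of_div (hU : IsOpen U)
    {G : Fin 3 → EuclideanSpace ℝ (Fin 3) → ℝ} (hG : ∀ q, ContDiffOn ℝ (⊤ : ℕ∞) (G q) U)
    (hdiv : ∀ x ∈ U, ∑ q, pd3 q (G q) x = 0) (a b c : Fin 3) :
    ∀ x ∈ U, ∑ q, pd3 a (pd3 b (pd3 c (pd3 q (G q)))) x = 0 :=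
  have hG1 q : ContDiffOn ℝ (⊤ : ℕ∞) (pd3 q (G q)) U := (hG q).pd3 hU q
  sum_pd3_eqOn_zero hU (fun q => ((hG1 q).pd3 hU c).pd3 hU b) (sum_pd3_eqOn_zero hU
    (fun q => (hG1 q).pd3 hU c) (sum_pd3_eqOn_zero hU hG1 hdiv c) b) a

theorem lap3_lap3_eqOn (hU : IsOpen U) (hf : ContDiffOn ℝ (⊤ : ℕ∞) f U) :
    EqOn (lap3 (lap3 f)) (fun x => ∑ k, ∑ m, pd3 k (pd3 m (pd3 k (pd3 m f))) x) U :=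
  fun x hx => by
    unfold lap3
    refine sum_congr rfl fun k _ => ?_
    have hf2 m : ContDiffOn ℝ (⊤ : ℕ∞) (pd3 m (pd3 m f)) U := (hf.pd3 hU m).pd3 hU m
    rw [(pd3_sum hU hf2 k).pd3 hU k hx, pd3_sum hU (fun m => (hf2 m).pd3 hU k) k hx]
    exact sum_congr rfl fun m _ => (pd3_pd3_comm hU (hf.pd3 hU m) k m).pd3 hU k hx

theorem pd3_inc (hU : IsOpen U) {F : Fin 3 → Fin 3 → EuclideanSpace ℝ (Fin 3) → ℝ}
    (hF : ∀ a b, ContDiffOn ℝ (⊤ : ℕ∞) (F a b) U) (k i j : Fin 3) :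
    EqOn (pd3 k (inc F i j)) (inc (fun a b => pd3 k (F a b)) i j) U := fun x hx => by
  have hd : ∀ a b c d, DifferentiableAt ℝ (pd3 a (pd3 c (F b d))) x := fun a b c d =>
    ((((hF b d).pd3 hU c).pd3 hU a).contDiffAt (hU.mem_nhds hx)).differentiableAt (by simp)
  unfold inc
  simp (disch := fun_prop) only [pd3_sum_apply, pd3_const_mul_apply]
  refine sum_congr rfl fun a _ => sum_congr rfl fun b _ => sum_congr rfl fun c _ =>
    sum_congr rfl fun d _ => ?_
  rw [pd3_pd3_pd3_comm hU (hF b d) k a c hx]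

end Calculus

theorem sum_lc_mul_sum_lc_mul (p q : Fin 3) (h : Fin 3 → Fin 3 → ℝ) :
    ∑ n, lc p q n * ∑ c, ∑ d, lc n c d * h c d = h p q - h q p := by
  fin_cases p <;> fin_cases q <;> simp [Fin.sum_univ_three, lc] <;> ring

theorem sum_lc_mul_lc_mul_sum_lc_mul_lc (i j : Fin 3)
    (g : Fin 3 → Fin 3 → Fin 3 → Fin 3 → Fin 3 → Fin 3 → ℝ) :
    ∑ k, ∑ l, ∑ m, ∑ n, lc i k l * lc j m n *
        ∑ a, ∑ b, ∑ c, ∑ d, lc l a b * lc n c d * g k m a b c d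
      = ∑ k, ∑ m, (g k m i k j m - g k m i k m j - g k m k i j m + g k m k i m j) := by
  have regroup : ∀ k l m, ∑ n, lc i k l * lc j m n *
        ∑ a, ∑ b, ∑ c, ∑ d, lc l a b * lc n c d * g k m a b c d
      = lc i k l * ∑ a, ∑ b, lc l a b * ∑ n, lc j m n * ∑ c, ∑ d, lc n c d * g k m a b c d :=
    fun k l m => by simp only [Fin.sum_univ_three]; ring
  calc _ = ∑ k, ∑ m, ∑ l, lc i k l * ∑ a, ∑ b, lc l a b *
          ∑ n, lc j m n * ∑ c, ∑ d, lc n c d * g k m a b c d := by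
        simp only [regroup]
        exact sum_congr rfl fun k _ => sum_comm
    _ = _ := by
        simp only [sum_lc_mul_sum_lc_mul]
        exact sum_congr rfl fun k _ => sum_congr rfl fun m _ => by ring

/-- **Reduction under the divergence-free gauge** (proof of the paper's standard
decomposition theorem): if `∂_k F_ik = 0` on `U` then `inc(inc(F)) = ΔΔF` on `U`. -/
theorem inc_inc_eq_bilaplacian_of_gauge (U : Set (EuclideanSpace ℝ (Fin 3)))
    (hU : IsOpen U)
    (F : Fin 3 → Fin 3 → EuclideanSpace ℝ (Fin 3) → ℝ)
    (hF : ∀ i j, ContDiffOn ℝ (⊤ : ℕ∞) (F i j) U)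
    (hsym : ∀ i j, F i j = F j i)
    (hgauge : ∀ i, ∀ x ∈ U, ∑ k, pd3 k (F i k) x = 0) :
    ∀ i j, ∀ x ∈ U, inc (inc F) i j x = lap3 (lap3 (F i j)) x := by
  intro i j x hx
  have hinc k m l n : pd3 k (pd3 m (inc F l n)) x
      = inc (fun a b => pd3 k (pd3 m (F a b))) l n x :=
    ((pd3_inc hU hF m l n).pd3 hU k).trans (pd3_inc hU (fun a b => (hF a b).pd3 hU m) k l n) hx
  have hdiv p a b c := sum_pd3_pd3_pd3_pd3_eq_zero_of_div hU (hF p) (hgauge p) a b c x hx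
  have hT1 : ∑ k, ∑ m, pd3 i (pd3 j (pd3 k (pd3 m (F k m)))) x = 0 := by simp [hdiv]
  have hT2 : ∑ k, ∑ m, pd3 i (pd3 m (pd3 k (pd3 m (F k j)))) x = 0 := by
    rw [sum_comm]
    refine sum_eq_zero fun m _ => (sum_congr rfl fun k _ => ?_).trans (hdiv j i m m)
    rw [hsym k j]
    exact ((pd3_pd3_comm hU (hF j k) k m).pd3 hU m).pd3 hU i hx
  have hT3 : ∑ k, ∑ m, pd3 k (pd3 j (pd3 k (pd3 m (F i m)))) x = 0 := by simp [hdiv]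
  calc inc (inc F) i j x
      = ∑ k, ∑ l, ∑ m, ∑ n, lc i k l * lc j m n *
          inc (fun a b => pd3 k (pd3 m (F a b))) l n x := by simp only [inc, hinc]
    _ = ∑ k, ∑ m, (pd3 i (pd3 j (pd3 k (pd3 m (F k m)))) x
          - pd3 i (pd3 m (pd3 k (pd3 m (F k j)))) x
          - pd3 k (pd3 j (pd3 k (pd3 m (F i m)))) x
          + pd3 k (pd3 m (pd3 k (pd3 m (F i j)))) x) :=
        sum_lc_mul_lc_mul_sum_lc_mul_lc i j fun k m a b c d =>
          pd3 a (pd3 c (pd3 k (pd3 m (F b d)))) x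
    _ = ∑ k, ∑ m, pd3 k (pd3 m (pd3 k (pd3 m (F i j)))) x := by
        simp only [sum_add_distrib, sum_sub_distrib, hT1, hT2, hT3]
        ring
    _ = lap3 (lap3 (F i j)) x := (lap3_lap3_eqOn hU (hF i j) hx).symm
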